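/- Let V_t be the value-iteration iterates (V_0 ≡ 0, V_{t+1}(S) = c(S) + min{(K_0 V_t)(S), (K_1 V_t)(S)}) and define ΔV_t(S) = (K_1 V_t)(S) − (K_0 V_t)(S), with the associated optimal action a_t(S) = 1 if ΔV_t(S) < 0 and a_t(S) = 0 otherwise. Then for every t ≥ 0, every battery level e ∈ {1,...,E_max}, and every source state X ∈ {0,1}, the set {Δ ∈ {1,...,Δ_max} : a_t(e,X,Δ) = 1} is upward closed in Δ; equivalently, there exists a threshold Δ_TH (depending on t, e, X) such that transmitting is optimal if and only if Δ ≥ Δ_TH. Moreover ΔV_t(0,X,Δ) = 0 for all X, Δ, so the optimal action at an empty battery is to idle. Hence the optimal transmission policy is a threshold policy in the VIA (Theorem 1). -/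

import Mathlib

open Finset

namespace VIA

/-- The MDP state space: battery level, source state, VIA value. -/
abbrev State (Emax Dmax : ℕ) := Fin (Emax + 1) × Bool × Fin (Dmax + 1)

/-- Deterministic next state given the action `a`, energy arrival `b`,
source-flip indicator `f`, and channel-success indicator `h`. -/
def nextState (Emax Dmax : ℕ) (s : State Emax Dmax) (a b f h : Bool) :
    State Emax Dmax :=
  let act : Bool := a && decide (0 < s.1.val)
  -- a successful transmission requires transmitting and channel success
  let succ : Bool := act && h
  (⟨min (s.1.val + (if b then 1 else 0) - (if act then 1 else 0)) Emax,
      Nat.lt_succ_of_le (min_le_right _ _)⟩,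
   (if f then !s.2.1 else s.2.1),
   ⟨min (if succ then (if f then 1 else 0)
         else (if f then s.2.2.val + 1 else s.2.2.val)) Dmax,
      Nat.lt_succ_of_le (min_le_right _ _)⟩)

/-- Bernoulli weight: probability `x` for `true`, `1 - x` for `false`. -/
def bern (x : ℝ) : Bool → ℝ := fun b => if b then x else 1 - x

/-- The transition kernel `K_a(s, s')` of the MDP, for action `a`
(`a = true` means transmit).  The source flips with probability `p`
from state `0 = false` and with probability `q` from state `1 = true`;
energy arrives with probability `β`; a transmission succeeds with
probability `ps`. -/
def K (Emax Dmax : ℕ) (p q β ps : ℝ) (a : Bool) (s s' : State Emax Dmax) : ℝ :=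
  ∑ b : Bool, ∑ f : Bool, ∑ h : Bool,
    bern β b * bern (if s.2.1 then q else p) f * bern ps h *
      (if nextState Emax Dmax s a b f h = s' then 1 else 0)

/-- The per-stage cost: the VIA value. -/
def cost (Emax Dmax : ℕ) (s : State Emax Dmax) : ℝ := s.2.2.val

/-- `(K_a V)(s) = ∑_{s'} K_a(s,s') V(s')`. -/
def KV (Emax Dmax : ℕ) (p q β ps : ℝ) (a : Bool) (V : State Emax Dmax → ℝ)
    (s : State Emax Dmax) : ℝ :=
  ∑ s' : State Emax Dmax, K Emax Dmax p q β ps a s s' * V s'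

/-- Value iteration: `V_0 ≡ 0`,
`V_{t+1}(s) = c(s) + min{(K_0 V_t)(s), (K_1 V_t)(s)}`. -/
def Viter (Emax Dmax : ℕ) (p q β ps : ℝ) : ℕ → State Emax Dmax → ℝ
  | 0 => fun _ => 0
  | t + 1 => fun s =>
      cost Emax Dmax s +
        min (KV Emax Dmax p q β ps false (Viter Emax Dmax p q β ps t) s)
            (KV Emax Dmax p q β ps true (Viter Emax Dmax p q β ps t) s)

/-- `ΔV_t(s) = (K_1 V_t)(s) − (K_0 V_t)(s)`. -/
def dV (Emax Dmax : ℕ) (p q β ps : ℝ) (t : ℕ) (s : State Emax Dmax) : ℝ :=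
  KV Emax Dmax p q β ps true (Viter Emax Dmax p q β ps t) s -
    KV Emax Dmax p q β ps false (Viter Emax Dmax p q β ps t) s

/-!
Value iteration preserves two properties of the value function `W(e, X, Δ)`, extended to all
battery levels and ages by clamping: `W` is nondecreasing in `Δ`, and raising `Δ` costs at
battery `e + 1` at least `1 - p_s` times what it costs at battery `e`. Both survive the minimum
in the Bellman step because the second one holds between any pair of actions at `e` and `e + 1`.

Given the energy arrival `b`, transmitting from battery `e + 1` leads to battery `b + e`, with
the age reset with probability `p_s` and otherwise evolving as under idling, which leads to
battery `b + e + 1`. The second property therefore makes `ΔV_t` nonincreasing in `Δ`, so the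
set of ages at which transmitting is optimal is upward closed. From an empty battery both
actions induce the same kernel.
-/

def arrivalFlipWeight (p q β : ℝ) (X b f : Bool) : ℝ :=
  bern β b * bern (if X then q else p) f

def arrivalFlipMean (p q β : ℝ) (X : Bool) (φ : Bool → Bool → ℝ) : ℝ :=
  ∑ b : Bool, ∑ f : Bool, arrivalFlipWeight p q β X b f * φ b f

lemma bern_nonneg {x : ℝ} (h0 : 0 ≤ x) (h1 : x ≤ 1) (b : Bool) : 0 ≤ bern x b := by
  cases b <;> simp [bern] <;> linarith

lemma arrivalFlipWeight_nonneg {p q β : ℝ} (hp0 : 0 ≤ p) (hp1 : p ≤ 1) (hq0 : 0 ≤ q)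
    (hq1 : q ≤ 1) (hβ0 : 0 ≤ β) (hβ1 : β ≤ 1) (X b f : Bool) :
    0 ≤ arrivalFlipWeight p q β X b f := by
  refine mul_nonneg (bern_nonneg hβ0 hβ1 b) ?_
  cases X
  · exact bern_nonneg hp0 hp1 f
  · exact bern_nonneg hq0 hq1 f

section Mean

variable {p q β : ℝ} {X : Bool}

lemma arrivalFlipMean_le_arrivalFlipMean (hw : ∀ b f, 0 ≤ arrivalFlipWeight p q β X b f)
    {φ ψ : Bool → Bool → ℝ} (h : ∀ b f, φ b f ≤ ψ b f) :
    arrivalFlipMean p q β X φ ≤ arrivalFlipMean p q β X ψ :=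
  Finset.sum_le_sum fun b _ => Finset.sum_le_sum fun f _ =>
    mul_le_mul_of_nonneg_left (h b f) (hw b f)

lemma mul_sub_arrivalFlipMean_le (hw : ∀ b f, 0 ≤ arrivalFlipWeight p q β X b f)
    {c : ℝ} {φ φ' ψ ψ' : Bool → Bool → ℝ} (h : ∀ b f, c * (φ' b f - φ b f) ≤ ψ' b f - ψ b f) :
    c * (arrivalFlipMean p q β X φ' - arrivalFlipMean p q β X φ) ≤
      arrivalFlipMean p q β X ψ' - arrivalFlipMean p q β X ψ := by
  have hwh := fun b f => mul_le_mul_of_nonneg_left (h b f) (hw b f)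
  simp only [arrivalFlipMean, Fintype.sum_bool]
  linarith [hwh true true, hwh true false, hwh false true, hwh false false]

end Mean

/-- `(K_a W)(e, X, Δ)` for a function `W` of unclamped battery level and age. -/
def expectedNext (p q β ps : ℝ) (W : ℕ → Bool → ℕ → ℝ) (a : Bool) (e : ℕ) (X : Bool) (d : ℕ) :
    ℝ :=
  ∑ b : Bool, ∑ f : Bool, ∑ h : Bool,
    bern β b * bern (if X then q else p) f * bern ps h *
      W (e + (if b then 1 else 0) - (if a && decide (0 < e) then 1 else 0))
        (if f then !X else X)
        (if a && decide (0 < e) && h then (if f then 1 else 0)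
         else (if f then d + 1 else d))

section Kernel

variable {p q β ps : ℝ} {W : ℕ → Bool → ℕ → ℝ}

lemma expectedNext_idle (e : ℕ) (X : Bool) (d : ℕ) :
    expectedNext p q β ps W false e X d =
      arrivalFlipMean p q β X fun b f => W (b.toNat + e) (f ^^ X) (d + f.toNat) := by
  simp only [expectedNext, arrivalFlipMean, arrivalFlipWeight, Fintype.sum_bool]
  cases X <;> simp [bern, add_comm e 1] <;> ring

lemma expectedNext_transmit (e : ℕ) (X : Bool) (d : ℕ) :
    expectedNext p q β ps W true (e + 1) X d =
      arrivalFlipMean p q β X fun b f =>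
        ps * W (b.toNat + e) (f ^^ X) f.toNat +
          (1 - ps) * W (b.toNat + e) (f ^^ X) (d + f.toNat) := by
  simp only [expectedNext, arrivalFlipMean, arrivalFlipWeight, Fintype.sum_bool]
  cases X <;> simp [bern, add_comm e 1] <;> ring

lemma expectedNext_empty (a : Bool) :
    expectedNext p q β ps W a 0 = expectedNext p q β ps W false 0 := by
  funext X d
  simp [expectedNext]

end Kernel

lemma mul_min_sub_min_le {c A A' B B' C C' D D' : ℝ} (hc : 0 ≤ c)
    (hCA : c * (C' - C) ≤ A' - A) (hDA : c * (D' - D) ≤ A' - A)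
    (hCB : c * (C' - C) ≤ B' - B) (hDB : c * (D' - D) ≤ B' - B) :
    c * (min C' D' - min C D) ≤ min A' B' - min A B := by
  have hC' := mul_le_mul_of_nonneg_left (min_le_left C' D') hc
  have hD' := mul_le_mul_of_nonneg_left (min_le_right C' D') hc
  rcases min_choice C D with h | h <;> rcases min_choice A' B' with h' | h' <;> rw [h, h'] <;>
    linarith [min_le_left A B, min_le_right A B]

structure ThresholdShape (ps : ℝ) (W : ℕ → Bool → ℕ → ℝ) : Prop where
  monotone : ∀ e X, Monotone (W e X)
  mul_sub_le_succ : ∀ e X {d d'}, d ≤ d' →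
    (1 - ps) * (W e X d' - W e X d) ≤ W (e + 1) X d' - W (e + 1) X d

def bellman (p q β ps : ℝ) (W : ℕ → Bool → ℕ → ℝ) (e : ℕ) (X : Bool) (d : ℕ) : ℝ :=
  d + min (expectedNext p q β ps W false e X d) (expectedNext p q β ps W true e X d)

namespace ThresholdShape

variable {p q β ps : ℝ} {W : ℕ → Bool → ℕ → ℝ}

lemma clamp (hps0 : 0 ≤ ps) (hW : ThresholdShape ps W) (E D : ℕ) :
    ThresholdShape ps fun e X d => W (min e E) X (min d D) where
  monotone e X _ _ hdd := hW.monotone _ _ (min_le_min_right D hdd)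
  mul_sub_le_succ e X d d' hdd := by
    have hdD := min_le_min_right D hdd
    rcases lt_or_ge e E with he | he
    · rw [min_eq_left he.le, min_eq_left (Nat.succ_le_of_lt he)]
      exact hW.mul_sub_le_succ _ _ hdD
    · rw [min_eq_right he, min_eq_right (he.trans (Nat.le_succ e))]
      exact mul_le_of_le_one_left (sub_nonneg.2 (hW.monotone _ _ hdD)) (by linarith)

lemma expectedNext_monotone (hw : ∀ X b f, 0 ≤ arrivalFlipWeight p q β X b f)
    (hps1 : ps ≤ 1) (hW : ThresholdShape ps W) (a : Bool) (e : ℕ) (X : Bool) :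
    Monotone (expectedNext p q β ps W a e X) := by
  have idle (e : ℕ) : Monotone (expectedNext p q β ps W false e X) := fun d d' hdd => by
    simp only [expectedNext_idle]
    exact arrivalFlipMean_le_arrivalFlipMean (hw X) fun b f =>
      hW.monotone _ _ (Nat.add_le_add_right hdd _)
  cases a
  · exact idle e
  cases e with
  | zero => rw [expectedNext_empty]; exact idle 0
  | succ e =>
    intro d d' hdd
    simp only [expectedNext_transmit]
    exact arrivalFlipMean_le_arrivalFlipMean (hw X) fun b f => add_le_add le_rfl
      (mul_le_mul_of_nonneg_left (hW.monotone _ _ (Nat.add_le_add_right hdd _))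
        (sub_nonneg.2 hps1))

lemma expectedNext_mul_sub_le_succ (hw : ∀ X b f, 0 ≤ arrivalFlipWeight p q β X b f)
    (hps1 : ps ≤ 1) (hW : ThresholdShape ps W) (a a' : Bool) (e : ℕ) (X : Bool)
    {d d' : ℕ} (hdd : d ≤ d') :
    (1 - ps) * (expectedNext p q β ps W a e X d' - expectedNext p q β ps W a e X d) ≤
      expectedNext p q β ps W a' (e + 1) X d' - expectedNext p q β ps W a' (e + 1) X d := by
  have hc : 0 ≤ 1 - ps := sub_nonneg.2 hps1
  have step (k : ℕ) (b f : Bool) :=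
    hW.mul_sub_le_succ (b.toNat + k) (f ^^ X) (Nat.add_le_add_right hdd f.toNat)
  have from_idle (e : ℕ) :
      (1 - ps) * (expectedNext p q β ps W false e X d' - expectedNext p q β ps W false e X d) ≤
        expectedNext p q β ps W a' (e + 1) X d' - expectedNext p q β ps W a' (e + 1) X d := by
    cases a'
    · simp only [expectedNext_idle]
      exact mul_sub_arrivalFlipMean_le (hw X) fun b f => step e b f
    · simp only [expectedNext_idle, expectedNext_transmit]
      exact mul_sub_arrivalFlipMean_le (hw X) fun b f => le_of_eq (by ring)
  cases a
  · exact from_idle e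
  cases e with
  | zero => rw [expectedNext_empty]; exact from_idle 0
  | succ e =>
    cases a'
    · simp only [expectedNext_idle, expectedNext_transmit]
      refine mul_sub_arrivalFlipMean_le (hw X) fun b f => ?_
      have h1 := mul_le_mul_of_nonneg_left (step e b f) hc
      have h2 := step (e + 1) b f
      simp only [← Nat.add_assoc] at h2 ⊢
      linarith
    · simp only [expectedNext_transmit]
      refine mul_sub_arrivalFlipMean_le (hw X) fun b f => ?_
      have h1 := mul_le_mul_of_nonneg_left (step e b f) hc
      simp only [← Nat.add_assoc]
      linarith

lemma bellman (hw : ∀ X b f, 0 ≤ arrivalFlipWeight p q β X b f)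
    (hps0 : 0 ≤ ps) (hps1 : ps ≤ 1) (hW : ThresholdShape ps W) :
    ThresholdShape ps (bellman p q β ps W) where
  monotone e X _ _ hdd := add_le_add (Nat.cast_le.2 hdd)
    (min_le_min (hW.expectedNext_monotone hw hps1 false e X hdd)
      (hW.expectedNext_monotone hw hps1 true e X hdd))
  mul_sub_le_succ e X d d' hdd := by
    have hmin := mul_min_sub_min_le (sub_nonneg.2 hps1)
      (hW.expectedNext_mul_sub_le_succ hw hps1 false false e X hdd)
      (hW.expectedNext_mul_sub_le_succ hw hps1 true false e X hdd)
      (hW.expectedNext_mul_sub_le_succ hw hps1 false true e X hdd)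
      (hW.expectedNext_mul_sub_le_succ hw hps1 true true e X hdd)
    have hage : (1 - ps) * ((d' : ℝ) - d) ≤ d' - d :=
      mul_le_of_le_one_left (sub_nonneg.2 (Nat.cast_le.2 hdd)) (by linarith)
    simp only [VIA.bellman]
    linarith

lemma antitone_transmit_sub_idle (hw : ∀ X b f, 0 ≤ arrivalFlipWeight p q β X b f)
    (hW : ThresholdShape ps W) (e : ℕ) (X : Bool) :
    Antitone fun d =>
      expectedNext p q β ps W true (e + 1) X d - expectedNext p q β ps W false (e + 1) X d := by
  intro d d' hdd
  have key : 1 * (expectedNext p q β ps W true (e + 1) X d' -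
      expectedNext p q β ps W true (e + 1) X d) ≤
        expectedNext p q β ps W false (e + 1) X d' - expectedNext p q β ps W false (e + 1) X d := by
    simp only [expectedNext_idle, expectedNext_transmit]
    refine mul_sub_arrivalFlipMean_le (hw X) fun b f => ?_
    have h := hW.mul_sub_le_succ (b.toNat + e) (f ^^ X) (Nat.add_le_add_right hdd f.toNat)
    simp only [← Nat.add_assoc]
    linarith
  dsimp only
  linarith

end ThresholdShape

lemma exists_threshold_of_upwardClosed {n : ℕ} {P : Fin n → Prop}
    (hP : ∀ i j, i ≤ j → P i → P j) : ∃ th : ℕ, ∀ i : Fin n, P i ↔ th ≤ i := by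
  classical
  by_cases hex : ∃ k, ∃ hk : k < n, P ⟨k, hk⟩
  · refine ⟨Nat.find hex, fun i => ⟨fun hi => Nat.find_min' hex ⟨i.2, hi⟩, fun hle => ?_⟩⟩
    obtain ⟨hk, hP'⟩ := Nat.find_spec hex
    exact hP _ _ (Fin.mk_le_mk.2 hle) hP'
  · simp only [not_exists] at hex
    exact ⟨n, fun i => ⟨fun hi => absurd hi (hex i i.2), fun h => absurd i.2 (by omega)⟩⟩

def extendClamped {Emax Dmax : ℕ} (V : State Emax Dmax → ℝ) (e : ℕ) (X : Bool) (d : ℕ) : ℝ :=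
  V (⟨min e Emax, Nat.lt_succ_of_le (min_le_right _ _)⟩, X,
    ⟨min d Dmax, Nat.lt_succ_of_le (min_le_right _ _)⟩)

section ValueIteration

variable {Emax Dmax : ℕ} {p q β ps : ℝ}

lemma KV_eq_expectedNext (a : Bool) (V : State Emax Dmax → ℝ) (s : State Emax Dmax) :
    KV Emax Dmax p q β ps a V s = expectedNext p q β ps (extendClamped V) a s.1 s.2.1 s.2.2 := by
  simp only [KV, K, expectedNext, Finset.sum_mul]
  rw [Finset.sum_comm]
  refine Finset.sum_congr rfl fun b _ => ?_
  rw [Finset.sum_comm]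
  refine Finset.sum_congr rfl fun f _ => ?_
  rw [Finset.sum_comm]
  refine Finset.sum_congr rfl fun h _ => ?_
  simp only [mul_assoc, ite_mul, zero_mul, mul_ite, mul_one, mul_zero,
    Finset.sum_ite_eq, Finset.mem_univ, if_true]
  rfl

lemma extendClamped_Viter_succ (t : ℕ) :
    extendClamped (Viter Emax Dmax p q β ps (t + 1)) =
      fun e X d => bellman p q β ps (extendClamped (Viter Emax Dmax p q β ps t))
        (min e Emax) X (min d Dmax) := by
  funext e X d
  simp only [extendClamped, Viter, cost, bellman, KV_eq_expectedNext]

lemma thresholdShape_extendClamped_Viter (hw : ∀ X b f, 0 ≤ arrivalFlipWeight p q β X b f)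
    (hps0 : 0 ≤ ps) (hps1 : ps ≤ 1) (t : ℕ) :
    ThresholdShape ps (extendClamped (Viter Emax Dmax p q β ps t)) := by
  induction t with
  | zero => exact ⟨fun _ _ => monotone_const, fun _ _ _ _ _ => by simp [extendClamped, Viter]⟩
  | succ t ih =>
    rw [extendClamped_Viter_succ]
    exact (ih.bellman hw hps0 hps1).clamp hps0 Emax Dmax

lemma dV_eq_expectedNext (t : ℕ) (s : State Emax Dmax) :
    dV Emax Dmax p q β ps t s =
      expectedNext p q β ps (extendClamped (Viter Emax Dmax p q β ps t)) true s.1 s.2.1 s.2.2 -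
        expectedNext p q β ps (extendClamped (Viter Emax Dmax p q β ps t)) false
          s.1 s.2.1 s.2.2 := by
  simp only [dV, KV_eq_expectedNext]

lemma dV_antitone (hw : ∀ X b f, 0 ≤ arrivalFlipWeight p q β X b f)
    (hps0 : 0 ≤ ps) (hps1 : ps ≤ 1) (t : ℕ) {e : ℕ} (he1 : 1 ≤ e) (he : e < Emax + 1)
    (X : Bool) : Antitone fun d : Fin (Dmax + 1) => dV Emax Dmax p q β ps t (⟨e, he⟩, X, d) := by
  obtain ⟨e, rfl⟩ : ∃ e', e = e' + 1 := ⟨e - 1, by omega⟩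
  intro d d' hdd
  simp only [dV_eq_expectedNext]
  exact (thresholdShape_extendClamped_Viter hw hps0 hps1 t).antitone_transmit_sub_idle hw e X hdd

lemma dV_empty_battery (t : ℕ) (h0 : 0 < Emax + 1) (X : Bool) (d : Fin (Dmax + 1)) :
    dV Emax Dmax p q β ps t (⟨0, h0⟩, X, d) = 0 := by
  rw [dV_eq_expectedNext]
  exact sub_eq_zero.2 (congrFun₂ (expectedNext_empty true) X d)

end ValueIteration

/-- **Theorem 1 (threshold structure of the optimal policy).**
With `a_t(S) = 1 ↔ ΔV_t(S) < 0`, for every `t`, every nonempty battery level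
`1 ≤ e ≤ E_max` and source state `X`, the set of VIA values
`Δ ∈ {1,…,Δ_max}` at which transmitting is optimal is upward closed;
equivalently, there is a threshold `Δ_TH` (depending on `t, e, X`) such that
transmitting is optimal iff `Δ ≥ Δ_TH`.  Moreover `ΔV_t(0,X,Δ) = 0`, so at an
empty battery idling is optimal.  Hence the optimal transmission policy is a
threshold policy. -/
theorem optimal_policy_is_threshold (Emax Dmax : ℕ)
    (p q β ps : ℝ) (hp0 : 0 ≤ p) (hp1 : p ≤ 1) (hq0 : 0 ≤ q) (hq1 : q ≤ 1)
    (hβ0 : 0 ≤ β) (hβ1 : β ≤ 1) (hps0 : 0 ≤ ps) (hps1 : ps ≤ 1) :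
    (∀ (t : ℕ) (e : ℕ), ∀ he1 : 1 ≤ e, ∀ he2 : e ≤ Emax, ∀ X : Bool,
      (∀ d d' : ℕ, ∀ hd1 : 1 ≤ d, ∀ hdd : d ≤ d', ∀ hd' : d' ≤ Dmax,
        dV Emax Dmax p q β ps t (⟨e, by omega⟩, X, ⟨d, by omega⟩) < 0 →
        dV Emax Dmax p q β ps t (⟨e, by omega⟩, X, ⟨d', by omega⟩) < 0) ∧
      (∃ th : ℕ, ∀ d : ℕ, ∀ hd1 : 1 ≤ d, ∀ hd : d ≤ Dmax,
        (dV Emax Dmax p q β ps t (⟨e, by omega⟩, X, ⟨d, by omega⟩) < 0 ↔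
          th ≤ d))) ∧
    (∀ (t : ℕ) (X : Bool) (d : ℕ), ∀ hd : d ≤ Dmax,
      dV Emax Dmax p q β ps t (⟨0, by omega⟩, X, ⟨d, by omega⟩) = 0) := by
  have hw := arrivalFlipWeight_nonneg hp0 hp1 hq0 hq1 hβ0 hβ1
  refine ⟨fun t e he1 he2 X => ?_, fun t X d _ => dV_empty_battery t _ X _⟩
  have hanti := dV_antitone (Dmax := Dmax) hw hps0 hps1 t he1 (Nat.lt_succ_of_le he2) X
  have transmit_upward (i j : Fin (Dmax + 1)) (hij : i ≤ j)
      (hi : dV Emax Dmax p q β ps t (⟨e, _⟩, X, i) < 0) :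
      dV Emax Dmax p q β ps t (⟨e, _⟩, X, j) < 0 :=
    (hanti hij).trans_lt hi
  obtain ⟨th, hth⟩ := exists_threshold_of_upwardClosed transmit_upward
  exact ⟨fun d d' _ hdd _ => transmit_upward _ _ (Fin.mk_le_mk.2 hdd),
    ⟨th, fun d _ _ => hth _⟩⟩

end VIA
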